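/- arXiv:2205.03504 — 5 statements merged into one kernel-verified Lean document; each statement's English description precedes it below -/
import Mathlib

section
/- Assume every complex root of the polynomial zⁿ + c_1 zⁿ⁻¹ + … + c_n has modulus strictly less than 1. Let x : ℕ → ℝⁿ, u, w, y : ℕ → ℝ satisfy x_{k+1} = A x_k + B₁ u_k + B₂ w_k and y_k = C x_k + w_k for all k, and let the observer x̂ : ℕ → ℝⁿ satisfy x̂_{k+1} = A x̂_k + B₁ u_k + B₂ (y_k − C x̂_k) for all k (with arbitrary initial value x̂_0). Then the estimation error ε_k := x_k − x̂_k satisfies ε_{k+1} = (A − B₂C) ε_k for every k, and ε_k → 0 as k → ∞. -/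
open Matrix

/-- Observable-canonical state matrix: subdiagonal ones and last column `(-a_n, …, -a_1)ᵀ`. -/
def ocA {n : ℕ} (a : Fin (n + 1) → ℝ) : Matrix (Fin (n + 1)) (Fin (n + 1)) ℝ :=
  Matrix.of fun i j =>
    if j = Fin.last n then -a i.rev else if (i : ℕ) = (j : ℕ) + 1 then 1 else 0

/-- Input vector `B₁ = (b_n, …, b_1)ᵀ`. -/
def ocB1 {n : ℕ} (b : Fin (n + 1) → ℝ) : Fin (n + 1) → ℝ := fun i => b i.rev

/-- Noise vector `B₂ = (c̃_n, …, c̃_1)ᵀ` with `c̃_i = c_i - a_i`. -/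
def ocB2 {n : ℕ} (a c : Fin (n + 1) → ℝ) : Fin (n + 1) → ℝ := fun i => c i.rev - a i.rev

/-- Output row vector `C = (0, …, 0, 1)`. -/
def ocC {n : ℕ} : Fin (n + 1) → ℝ := fun j => if j = Fin.last n then 1 else 0

section Aux

open Filter
open scoped NNReal ENNReal

lemma key_mat (n : ℕ) (a c : Fin (n + 1) → ℝ) :
    ocA a - Matrix.vecMulVec (ocB2 a c) ocC = ocA c := by
  ext i j
  simp only [ocA, ocB2, ocC, Matrix.sub_apply, Matrix.vecMulVec_apply, Matrix.of_apply]
  by_cases h : j = Fin.last n <;> simp [h] <;> ring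

lemma sub_vecMulVec_mulVec {n : ℕ} (M : Matrix (Fin n) (Fin n) ℝ) (B C v : Fin n → ℝ) :
    (M - Matrix.vecMulVec B C).mulVec v = M.mulVec v - (C ⬝ᵥ v) • B := by
  ext i
  simp only [mulVec, dotProduct, Matrix.sub_apply, Matrix.vecMulVec_apply, Pi.sub_apply,
    Pi.smul_apply, smul_eq_mul, sub_mul, Finset.sum_sub_distrib, Finset.sum_mul]
  congr 1
  exact Finset.sum_congr rfl fun j _ => by ring

lemma spec_root (n : ℕ) (c : Fin (n + 1) → ℝ) (z : ℂ)
    (hz : z ∈ spectrum ℂ ((ocA c).map Complex.ofReal)) :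
    z ^ (n + 1) + ∑ j : Fin (n + 1), (c j : ℂ) * z ^ (n - (j : ℕ)) = 0 := by
  set M := (ocA c).map Complex.ofReal with hMdef
  rw [spectrum.mem_iff] at hz
  have hdet : (algebraMap ℂ (Matrix (Fin (n+1)) (Fin (n+1)) ℂ) z - M).det = 0 := by
    by_contra h
    exact hz ((Matrix.isUnit_iff_isUnit_det _).mpr (isUnit_iff_ne_zero.mpr h))
  obtain ⟨v, hv0, hv⟩ := (Matrix.exists_mulVec_eq_zero_iff).mpr hdet
  have heig : ∀ i, z * v i = (M *ᵥ v) i := by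
    intro i
    have := congrFun hv i
    simp only [Matrix.sub_mulVec, Pi.sub_apply, Pi.zero_apply, sub_eq_zero] at this
    rw [← this]
    simp [Matrix.algebraMap_matrix_apply, Matrix.mulVec, dotProduct,
      Matrix.algebraMap_eq_diagonal]
  have hMv : ∀ i, (M *ᵥ v) i =
      (∑ j : Fin (n+1), if (i:ℕ) = (j:ℕ) + 1 then v j else 0)
        - (c i.rev : ℂ) * v (Fin.last n) := by
    intro i
    have hterm : ∀ j : Fin (n+1), M i j * v j =
        (if (i:ℕ) = (j:ℕ) + 1 then v j else 0)
          - (if j = Fin.last n then (c i.rev : ℂ) * v j else 0) := by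
      intro j
      simp only [hMdef, Matrix.map_apply, ocA, Matrix.of_apply]
      by_cases hj : j = Fin.last n
      · subst hj
        have h1 : ¬ ((i:ℕ) = (Fin.last n : Fin (n+1)) + 1) := by
          simp [Fin.last]; omega
        rw [if_pos rfl, if_pos rfl, if_neg h1]
        push_cast
        ring
      · by_cases hij : (i:ℕ) = (j:ℕ) + 1 <;> simp [hj, hij]
    simp only [Matrix.mulVec, dotProduct, hterm, Finset.sum_sub_distrib]
    congr 1
    rw [Finset.sum_ite_eq' Finset.univ (Fin.last n)]
    simp
  set g : ℕ → ℂ := fun k =>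
    z ^ k + ∑ j : Fin (n+1), if (j:ℕ) < k then (c j : ℂ) * z ^ (k - 1 - (j:ℕ)) else 0 with hg
  have hg0 : g 0 = 1 := by simp [hg]
  have hgrec : ∀ k (hk : k < n + 1), g (k+1) = z * g k + (c ⟨k, hk⟩ : ℂ) := by
    intro k hk
    have hterm : ∀ j : Fin (n+1),
        (if (j:ℕ) < k + 1 then (c j : ℂ) * z ^ (k + 1 - 1 - (j:ℕ)) else 0) =
        (if (j:ℕ) < k then z * ((c j : ℂ) * z ^ (k - 1 - (j:ℕ))) else 0)
          + (if j = (⟨k, hk⟩ : Fin (n+1)) then (c j : ℂ) else 0) := by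
      intro j
      simp only [Nat.add_sub_cancel]
      by_cases h1 : (j:ℕ) < k
      · have h2 : (j:ℕ) < k + 1 := by omega
        have h3 : j ≠ (⟨k, hk⟩ : Fin (n+1)) := by
          intro h; rw [h] at h1; simp at h1
        have h4 : k - (j:ℕ) = (k - 1 - (j:ℕ)) + 1 := by omega
        rw [if_pos h1, if_pos h2, if_neg h3, h4, pow_succ]
        ring
      · by_cases h2 : (j:ℕ) = k
        · have h3 : j = (⟨k, hk⟩ : Fin (n+1)) := Fin.ext h2
          rw [if_pos (by omega), if_neg h1, if_pos h3, h2]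
          simp
        · rw [if_neg (by omega), if_neg h1, if_neg (fun h => h2 (by rw [h]))]
          simp
    have hpull : ∀ x : Fin (n+1), (if (x:ℕ) < k then z * ((c x : ℂ) * z ^ (k - 1 - (x:ℕ))) else 0)
        = z * (if (x:ℕ) < k then (c x : ℂ) * z ^ (k - 1 - (x:ℕ)) else 0) := by
      intro x; split <;> simp
    simp only [hg, hterm, Finset.sum_add_distrib, hpull, ← Finset.mul_sum]
    rw [Finset.sum_ite_eq' Finset.univ (⟨k, hk⟩ : Fin (n+1))]
    simp only [Finset.mem_univ, if_true, pow_succ]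
    ring
  have claim : ∀ k (hk : k < n + 1), v (Fin.rev ⟨k, hk⟩) = g k * v (Fin.last n) := by
    intro k
    induction k with
    | zero =>
      intro hk
      have h0 : Fin.rev (⟨0, hk⟩ : Fin (n+1)) = Fin.last n := by
        ext; simp [Fin.rev, Fin.last]
      rw [h0, hg0, one_mul]
    | succ k ih =>
      intro hk
      have hkn : k < n + 1 := by omega
      set j : Fin n := ⟨n - (k + 1), by omega⟩ with hjdef
      have hjs : (j.succ : ℕ) = ((Fin.rev (⟨k, hkn⟩ : Fin (n+1))) : ℕ) := by
        simp [hjdef, Fin.rev]; omega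
      have hjs' : j.succ = Fin.rev ⟨k, hkn⟩ := Fin.ext hjs
      have hjc : j.castSucc = Fin.rev ⟨k + 1, hk⟩ := by
        ext; simp [hjdef, Fin.rev]
      have he := heig (Fin.rev ⟨k, hkn⟩)
      rw [hMv] at he
      have hrev : (Fin.rev (⟨k, hkn⟩ : Fin (n+1))).rev = ⟨k, hkn⟩ := Fin.rev_rev _
      rw [hrev] at he
      have hsum : (∑ j' : Fin (n+1),
          if ((Fin.rev (⟨k, hkn⟩ : Fin (n+1))):ℕ) = (j':ℕ) + 1 then v j' else 0)
          = v j.castSucc := by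
        rw [Finset.sum_eq_single j.castSucc]
        · rw [if_pos (by rw [← hjs]; simp)]
        · intro b _ hb
          rw [if_neg]
          intro h
          apply hb
          ext
          rw [← hjs] at h
          simp [hjdef] at h ⊢
          omega
        · simp
      rw [hsum] at he
      have hvc : v j.castSucc = z * (g k * v (Fin.last n)) + (c ⟨k, hkn⟩ : ℂ) * v (Fin.last n) := by
        rw [← ih hkn]
        linear_combination -he
      rw [← hjc, hvc, hgrec k hkn]
      ring
  have hvlast : v (Fin.last n) ≠ 0 := by
    intro h0
    apply hv0
    funext i
    have hlt : ((Fin.rev i : Fin (n+1)) : ℕ) < n + 1 := (Fin.rev i).isLt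
    have := claim (Fin.rev i) hlt
    rw [show (⟨((Fin.rev i : Fin (n+1)) : ℕ), hlt⟩ : Fin (n+1)) = Fin.rev i from rfl,
      Fin.rev_rev, h0, mul_zero] at this
    exact this
  -- final identity
  have he0 := heig 0
  rw [hMv] at he0
  have hzero : (∑ j : Fin (n+1), if ((0 : Fin (n+1)):ℕ) = (j:ℕ) + 1 then v j else 0) = 0 := by
    apply Finset.sum_eq_zero
    intro j _
    rw [if_neg (by simp)]
  rw [hzero, zero_sub] at he0
  have hrev0 : (0 : Fin (n+1)).rev = Fin.last n := by
    ext; simp [Fin.rev, Fin.last]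
  rw [hrev0] at he0
  have hv0n : v 0 = g n * v (Fin.last n) := by
    have hlt : n < n + 1 := Nat.lt_succ_self n
    have := claim n hlt
    rw [show Fin.rev (⟨n, hlt⟩ : Fin (n+1)) = 0 from by ext; simp [Fin.rev]] at this
    exact this
  -- (z * g n + c last) * v last = 0
  have hkey : (z * g n + (c (Fin.last n) : ℂ)) * v (Fin.last n) = 0 := by
    rw [hv0n] at he0
    linear_combination he0
  have hpoly : z * g n + (c (Fin.last n) : ℂ) = 0 :=
    (mul_eq_zero.mp hkey).resolve_right hvlast
  -- rewrite p z as z * g n + c last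
  have hterm : ∀ j : Fin (n+1), (c j : ℂ) * z ^ (n - (j:ℕ)) =
      (if (j:ℕ) < n then z * ((c j : ℂ) * z ^ (n - 1 - (j:ℕ))) else 0)
        + (if j = Fin.last n then (c (Fin.last n) : ℂ) else 0) := by
    intro j
    by_cases h1 : (j:ℕ) < n
    · have h3 : j ≠ Fin.last n := by
        intro h; rw [h] at h1; simp [Fin.last] at h1
      have h4 : n - (j:ℕ) = (n - 1 - (j:ℕ)) + 1 := by omega
      rw [if_pos h1, if_neg h3, h4, pow_succ]
      ring
    · have h2 : (j:ℕ) = n := by omega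
      have h3 : j = Fin.last n := Fin.ext h2
      rw [if_neg h1, if_pos h3, h3]
      simp [Fin.last, h2]
  calc z ^ (n + 1) + ∑ j : Fin (n + 1), (c j : ℂ) * z ^ (n - (j : ℕ))
      = z * g n + (c (Fin.last n) : ℂ) := by
        have hpull : ∀ x : Fin (n+1), (if (x:ℕ) < n then z * ((c x : ℂ) * z ^ (n - 1 - (x:ℕ))) else 0)
            = z * (if (x:ℕ) < n then (c x : ℂ) * z ^ (n - 1 - (x:ℕ)) else 0) := by
          intro x; split <;> simp
        simp only [hterm, Finset.sum_add_distrib, hpull, ← Finset.mul_sum]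
        rw [Finset.sum_ite_eq' Finset.univ (Fin.last n)]
        simp only [Finset.mem_univ, if_true, hg, pow_succ]
        ring
    _ = 0 := hpoly

attribute [local instance] Matrix.linftyOpNormedRing Matrix.linftyOpNormedAlgebra

lemma norm_pow_tendsto (n : ℕ) (M : Matrix (Fin (n+1)) (Fin (n+1)) ℂ)
    (hspec : ∀ z ∈ spectrum ℂ M, ‖z‖ < 1) :
    Filter.Tendsto (fun k => ‖M ^ k‖) Filter.atTop (nhds 0) := by
  haveI : CompleteSpace (Matrix (Fin (n+1)) (Fin (n+1)) ℂ) :=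
    FiniteDimensional.complete ℂ _
  have hne : (spectrum ℂ M).Nonempty := spectrum.nonempty M
  have hρ : spectralRadius ℂ M < 1 := by
    have := spectrum.spectralRadius_lt_of_forall_lt_of_nonempty hne
      (r := 1) (fun z hz => by
        have := hspec z hz
        exact_mod_cast this)
    simpa using this
  have hG := spectrum.pow_nnnorm_pow_one_div_tendsto_nhds_spectralRadius M
  obtain ⟨t, ht1, ht2⟩ := exists_between hρ
  have htlt : t < ⊤ := lt_of_lt_of_le ht2 le_top
  set r : NNReal := t.toNNReal with hr
  have hrt : (r : ENNReal) = t := ENNReal.coe_toNNReal htlt.ne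
  have hr1 : r < 1 := by
    rw [← ENNReal.coe_lt_coe, hrt]; exact_mod_cast ht2
  have hev : ∀ᶠ k : ℕ in atTop, (‖M ^ k‖₊ : ENNReal) ^ (1 / (k:ℝ)) < (r : ENNReal) := by
    apply hG.eventually_lt_const
    rw [hrt]; exact ht1
  have hbound : ∀ᶠ k : ℕ in atTop, ‖M ^ k‖ ≤ (r : ℝ) ^ k := by
    filter_upwards [hev, eventually_ge_atTop 1] with k hk hk1
    have h1 : ((‖M ^ k‖₊ : ENNReal) ^ (1 / (k:ℝ))) ^ (k : ℝ) ≤ ((r : ENNReal)) ^ (k:ℝ) :=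
      ENNReal.rpow_le_rpow hk.le (by positivity)
    rw [← ENNReal.rpow_mul, one_div,
      inv_mul_cancel₀ (by positivity : (k:ℝ) ≠ 0),
      ENNReal.rpow_one, ENNReal.rpow_natCast, ← ENNReal.coe_pow, ENNReal.coe_le_coe] at h1
    calc ‖M ^ k‖ = ((‖M ^ k‖₊ : NNReal) : ℝ) := rfl
      _ ≤ ((r ^ k : NNReal) : ℝ) := by exact_mod_cast h1
      _ = (r : ℝ) ^ k := by push_cast; ring
  have hg0 : Tendsto (fun k : ℕ => (r : ℝ) ^ k) atTop (nhds 0) :=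
    tendsto_pow_atTop_nhds_zero_of_lt_one (by positivity) (by exact_mod_cast hr1)
  exact squeeze_zero' (Filter.Eventually.of_forall fun k => norm_nonneg _) hbound hg0

/-- If all roots of `zⁿ + c_1 zⁿ⁻¹ + … + c_n` have modulus `< 1`, then the observer
error satisfies `ε_{k+1} = (A - B₂C) ε_k` and converges to zero. -/
theorem stmt2 (n : ℕ) (a b c : Fin (n + 1) → ℝ)
    (hroots : ∀ z : ℂ,
      z ^ (n + 1) + ∑ j : Fin (n + 1), (c j : ℂ) * z ^ (n - (j : ℕ)) = 0 →
        ‖z‖ < 1)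
    (x xhat : ℕ → Fin (n + 1) → ℝ) (u w y : ℕ → ℝ)
    (hx : ∀ k, x (k + 1) = (ocA a).mulVec (x k) + u k • ocB1 b + w k • ocB2 a c)
    (hy : ∀ k, y k = ocC ⬝ᵥ x k + w k)
    (hxhat : ∀ k, xhat (k + 1) = (ocA a).mulVec (xhat k) + u k • ocB1 b
        + (y k - ocC ⬝ᵥ xhat k) • ocB2 a c) :
    (∀ k, x (k + 1) - xhat (k + 1) =
        (ocA a - Matrix.vecMulVec (ocB2 a c) ocC).mulVec (x k - xhat k)) ∧
    Filter.Tendsto (fun k => x k - xhat k) Filter.atTop (nhds 0) := by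
  have part1 : ∀ k, x (k + 1) - xhat (k + 1) =
      (ocA a - Matrix.vecMulVec (ocB2 a c) ocC).mulVec (x k - xhat k) := by
    intro k
    rw [sub_vecMulVec_mulVec, hx, hxhat, hy, Matrix.mulVec_sub, dotProduct_sub]
    module
  refine ⟨part1, ?_⟩
  set ε : ℕ → Fin (n + 1) → ℝ := fun k => x k - xhat k with hε
  set N : Matrix (Fin (n+1)) (Fin (n+1)) ℝ := ocA c with hN
  have hrec : ∀ k, ε (k + 1) = N.mulVec (ε k) := by
    intro k
    rw [hε]
    simp only
    rw [part1 k, key_mat]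
  have hpow : ∀ k, ε k = (N ^ k).mulVec (ε 0) := by
    intro k
    induction k with
    | zero => simp
    | succ k ih => rw [hrec k, ih, Matrix.mulVec_mulVec, ← pow_succ']
  set M : Matrix (Fin (n+1)) (Fin (n+1)) ℂ := N.map Complex.ofReal with hM
  have hMk : ∀ k, M ^ k = (N ^ k).map Complex.ofReal := by
    intro k
    have : M = Complex.ofRealHom.mapMatrix N := rfl
    rw [this, ← map_pow]
    rfl
  have hnorm := norm_pow_tendsto n M (fun z hz => hroots z (spec_root n c z hz))
  set vc : Fin (n+1) → ℂ := fun i => ((ε 0 i : ℝ) : ℂ) with hvc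
  have hcvec : ∀ k, (fun i => ((ε k i : ℝ) : ℂ)) = (M ^ k).mulVec vc := by
    intro k
    rw [hMk]
    funext i
    rw [show ε k i = ((N ^ k).mulVec (ε 0)) i from by rw [← hpow]]
    simp [Matrix.mulVec, dotProduct, Matrix.map_apply, hvc]
  rw [tendsto_pi_nhds]
  intro i
  have hb : ∀ k, ‖ε k i‖ ≤ ‖M ^ k‖ * ‖vc‖ := by
    intro k
    have h1 : ‖ε k i‖ = ‖((ε k i : ℝ) : ℂ)‖ := by
      rw [Complex.norm_real]
    rw [h1, show ((ε k i : ℝ) : ℂ) = ((M ^ k).mulVec vc) i from congrFun (hcvec k) i]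
    calc ‖((M ^ k).mulVec vc) i‖ ≤ ‖(M ^ k).mulVec vc‖ := norm_le_pi_norm _ i
      _ ≤ ‖M ^ k‖ * ‖vc‖ := Matrix.linfty_opNorm_mulVec _ _
  have hg : Tendsto (fun k => ‖M ^ k‖ * ‖vc‖) atTop (nhds 0) := by
    simpa using hnorm.mul_const ‖vc‖
  simpa using squeeze_zero_norm hb hg
end Aux
end

section
/- Let M_k be a sequence of n×n real matrices converging to a matrix M all of whose complex eigenvalues (roots of its characteristic polynomial over ℂ) have modulus strictly less than 1, let δ_k be a sequence in ℝⁿ converging to 0, and let ε : ℕ → ℝⁿ satisfy ε_{k+1} = M_k ε_k + δ_k for all k. Then ε_k → 0 as k → ∞. -/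
open Matrix Filter Polynomial
open scoped NNReal ENNReal

section AuxLemmas

attribute [local instance] Matrix.linftyOpNormedRing Matrix.linftyOpNormedAlgebra

lemma mem_spectrum_isRoot {n : ℕ} (A : Matrix (Fin n) (Fin n) ℂ) (z : ℂ)
    (hz : z ∈ spectrum ℂ A) : A.charpoly.IsRoot z := by
  rw [spectrum.mem_iff, Matrix.isUnit_iff_isUnit_det, isUnit_iff_ne_zero, not_not] at hz
  have h : A.charpoly.eval z = ((Matrix.scalar (Fin n)) z - A).det := by
    rw [Matrix.charpoly, eval_det, matPolyEquiv_charmatrix]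
    simp
  rw [IsRoot, h]
  convert hz using 2
  simp [Matrix.scalar_apply, Matrix.algebraMap_eq_diagonal]

lemma spectralRadius_lt_one {n : ℕ} (A : Matrix (Fin n) (Fin n) ℂ)
    (h : ∀ z : ℂ, A.charpoly.IsRoot z → ‖z‖ < 1) :
    spectralRadius ℂ A < 1 := by
  classical
  have hne : A.charpoly ≠ 0 := A.charpoly_monic.ne_zero
  set c : ℝ≥0 := A.charpoly.roots.toFinset.sup (fun z => ‖z‖₊) with hc
  have hc1 : c < 1 := by
    rw [hc, Finset.sup_lt_iff (by norm_num : (⊥ : ℝ≥0) < 1)]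
    intro z hz
    rw [Multiset.mem_toFinset, mem_roots hne] at hz
    have := h z hz
    rw [← NNReal.coe_lt_coe]
    simpa using this
  have hle : spectralRadius ℂ A ≤ (c : ENNReal) := by
    rw [spectralRadius]
    refine iSup₂_le fun z hz => ?_
    have hroot := mem_spectrum_isRoot A z hz
    have : ‖z‖₊ ≤ c :=
      Finset.le_sup (by rw [Multiset.mem_toFinset, mem_roots hne]; exact hroot)
    exact_mod_cast this
  refine lt_of_le_of_lt hle ?_
  exact_mod_cast hc1

lemma exists_pow_nnnorm_lt {n : ℕ} (A : Matrix (Fin n) (Fin n) ℂ)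
    (h : ∀ z : ℂ, A.charpoly.IsRoot z → ‖z‖ < 1) :
    ∃ m : ℕ, 1 ≤ m ∧ ‖A ^ m‖₊ < 1 := by
  letI : CompleteSpace (Matrix (Fin n) (Fin n) ℂ) :=
    inferInstance
  have hg := spectrum.pow_nnnorm_pow_one_div_tendsto_nhds_spectralRadius A
  have hsr := spectralRadius_lt_one A h
  have hev : ∀ᶠ k : ℕ in atTop, ((‖A ^ k‖₊ : ENNReal) ^ (1 / (k : ℝ))) < 1 :=
    hg.eventually_lt_const hsr
  obtain ⟨N, hN⟩ := eventually_atTop.mp hev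
  refine ⟨max N 1, le_max_right _ _, ?_⟩
  set m := max N 1
  have hm0 : (0:ℝ) < (m : ℝ) := by
    have : 1 ≤ m := le_max_right _ _
    exact_mod_cast Nat.lt_of_lt_of_le Nat.zero_lt_one this
  have h1 := hN m (le_max_left _ _)
  have h2 : (((‖A ^ m‖₊ : ENNReal) ^ (1 / (m : ℝ))) ^ (m : ℝ)) < 1 :=
    ENNReal.rpow_lt_one h1 hm0
  rw [← ENNReal.rpow_mul, one_div, inv_mul_cancel₀ (ne_of_gt hm0), ENNReal.rpow_one] at h2
  exact_mod_cast h2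

lemma nnnorm_map_ofReal {n : ℕ} (A : Matrix (Fin n) (Fin n) ℝ) :
    ‖A.map (Complex.ofReal)‖₊ = ‖A‖₊ := by
  simp [Matrix.linfty_opNNNorm_def, Matrix.map_apply]

lemma map_ofReal_pow {n : ℕ} (A : Matrix (Fin n) (Fin n) ℝ) (m : ℕ) :
    (A ^ m).map (Complex.ofReal) = (A.map (Complex.ofReal)) ^ m := by
  induction m with
  | zero => simp [Matrix.map_one]
  | succ m ih =>
      rw [pow_succ, pow_succ, ← ih]
      exact Matrix.map_mul (f := Complex.ofRealHom)

lemma matrix_norm_one_le {n : ℕ} : ‖(1 : Matrix (Fin n) (Fin n) ℝ)‖ ≤ 1 := by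
  rw [← coe_nnnorm, ← NNReal.coe_one, NNReal.coe_le_coe]
  rw [Matrix.linfty_opNNNorm_def]
  refine Finset.sup_le fun i _ => ?_
  simp [Matrix.one_apply, apply_ite]

lemma scalar_decay (u s : ℕ → ℝ) (r : ℝ) (hr0 : 0 ≤ r) (hr1 : r < 1)
    (hu : ∀ j, 0 ≤ u j) (hrec : ∀ j, u (j + 1) ≤ r * u j + s j)
    (hs : Tendsto s atTop (nhds 0)) : Tendsto u atTop (nhds 0) := by
  rw [Metric.tendsto_atTop] at hs ⊢
  intro η hη
  obtain ⟨J, hJ⟩ := hs (η * (1 - r) / 2) (by nlinarith)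
  have hsJ : ∀ k ≥ J, s k ≤ η * (1 - r) / 2 := by
    intro k hk
    have := hJ k hk
    rw [Real.dist_eq, sub_zero] at this
    exact (le_abs_self _).trans this.le
  have key : ∀ j, u (J + j) ≤ r ^ j * u J + η / 2 := by
    intro j
    induction j with
    | zero => simp only [pow_zero, one_mul, Nat.add_zero]; nlinarith [hu J]
    | succ j ih =>
        have h1 := hrec (J + j)
        have h2 := hsJ (J + j) (Nat.le_add_right _ _)
        have h3 : r * u (J + j) ≤ r * (r ^ j * u J + η / 2) :=
          mul_le_mul_of_nonneg_left ih hr0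
        have heq : u (J + (j + 1)) = u ((J + j) + 1) := by ring_nf
        rw [heq]
        calc u ((J + j) + 1) ≤ r * u (J + j) + s (J + j) := h1
          _ ≤ r * (r ^ j * u J + η / 2) + η * (1 - r) / 2 := by linarith
          _ = r ^ (j + 1) * u J + (r * (η / 2) + η * (1 - r) / 2) := by ring
          _ = r ^ (j + 1) * u J + η / 2 := by ring_nf
  have hpow : Tendsto (fun j : ℕ => r ^ j * u J) atTop (nhds 0) := by
    simpa using (tendsto_pow_atTop_nhds_zero_of_lt_one hr0 hr1).mul_const (u J)
  obtain ⟨j0, hj0⟩ := (Metric.tendsto_atTop.mp hpow) (η / 2) (by linarith)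
  refine ⟨J + j0, fun k hk => ?_⟩
  have hk' : u k ≤ r ^ (k - J) * u J + η / 2 := by
    have := key (k - J)
    rwa [Nat.add_sub_cancel' (by omega)] at this
  have hmono : r ^ (k - J) * u J ≤ r ^ j0 * u J :=
    mul_le_mul_of_nonneg_right (pow_le_pow_of_le_one hr0 hr1.le (by omega)) (hu J)
  have hj0' := hj0 j0 le_rfl
  rw [Real.dist_eq, sub_zero] at hj0'
  have hlt : r ^ j0 * u J < η / 2 := (le_abs_self _).trans_lt hj0'
  rw [Real.dist_eq, sub_zero, abs_of_nonneg (hu k)]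
  linarith

def prodMat {n : ℕ} (M : ℕ → Matrix (Fin n) (Fin n) ℝ) (k : ℕ) :
    ℕ → Matrix (Fin n) (Fin n) ℝ
  | 0 => 1
  | j + 1 => M (k + j) * prodMat M k j

end AuxLemmas

/-- If `M_k → M` with `M` stable (all complex eigenvalues strictly inside the unit circle),
`δ_k → 0`, and `ε_{k+1} = M_k ε_k + δ_k`, then `ε_k → 0`. -/
theorem stmt3 (n : ℕ) (M : ℕ → Matrix (Fin n) (Fin n) ℝ) (Mlim : Matrix (Fin n) (Fin n) ℝ)
    (hM : Tendsto M atTop (nhds Mlim))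
    (hstab : ∀ z : ℂ, (Mlim.map Complex.ofReal).charpoly.IsRoot z → ‖z‖ < 1)
    (δ : ℕ → Fin n → ℝ) (hδ : Tendsto δ atTop (nhds 0))
    (ε : ℕ → Fin n → ℝ) (hε : ∀ k, ε (k + 1) = (M k).mulVec (ε k) + δ k) :
    Tendsto ε atTop (nhds 0) := by
  letI : NormedRing (Matrix (Fin n) (Fin n) ℝ) := Matrix.linftyOpNormedRing
  obtain ⟨m, hm1, hmlt⟩ := exists_pow_nnnorm_lt (Mlim.map Complex.ofReal) hstab
  have hpow : ‖Mlim ^ m‖ < 1 := by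
    have h1 : ‖Mlim ^ m‖₊ < 1 := by
      rw [← nnnorm_map_ofReal, map_ofReal_pow]; exact hmlt
    exact_mod_cast h1
  set r : ℝ := (1 + ‖Mlim ^ m‖) / 2 with hrdef
  have hnn := norm_nonneg (Mlim ^ m)
  have hrlt1 : r < 1 := by rw [hrdef]; linarith
  have hr0 : 0 ≤ r := by rw [hrdef]; linarith
  have hmr : ‖Mlim ^ m‖ < r := by rw [hrdef]; linarith
  obtain ⟨B, hB⟩ := hM.norm.bddAbove_range
  set b : ℝ := max B 1 with hbdef
  have hb1 : (1:ℝ) ≤ b := le_max_right _ _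
  have hb0 : (0:ℝ) ≤ b := by linarith
  have hbk : ∀ k, ‖M k‖ ≤ b := fun k => le_trans (hB ⟨k, rfl⟩) (le_max_left _ _)
  -- convergence of products of m consecutive matrices
  have hPj : ∀ j, Tendsto (fun k => prodMat M k j) atTop (nhds (Mlim ^ j)) := by
    intro j
    induction j with
    | zero =>
        simp only [pow_zero]
        exact tendsto_const_nhds
    | succ j ih =>
        have hshift : Tendsto (fun k => M (k + j)) atTop (nhds Mlim) :=
          hM.comp (tendsto_add_atTop_nat j)
        have hmul := hshift.mul ih
        have hps : Mlim ^ (j + 1) = Mlim * Mlim ^ j := by rw [pow_succ']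
        rw [hps]
        exact hmul
  have hev : ∀ᶠ k in atTop, ‖prodMat M k m‖ < r := (hPj m).norm.eventually_lt_const hmr
  obtain ⟨K, hK⟩ := eventually_atTop.mp hev
  -- uniform norm bounds on products
  have hPb : ∀ k j, ‖prodMat M k j‖ ≤ b ^ j := by
    intro k j
    induction j with
    | zero =>
        rw [show prodMat M k 0 = (1 : Matrix (Fin n) (Fin n) ℝ) from rfl, pow_zero]
        exact matrix_norm_one_le
    | succ j ih =>
        calc ‖prodMat M k (j+1)‖ = ‖M (k + j) * prodMat M k j‖ := rfl
          _ ≤ ‖M (k + j)‖ * ‖prodMat M k j‖ := Matrix.linfty_opNorm_mul _ _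
          _ ≤ b * b ^ j := mul_le_mul (hbk _) ih (norm_nonneg _) hb0
          _ = b ^ (j+1) := (pow_succ' b j).symm
  set D : ℕ → ℝ := fun k => ∑ i ∈ Finset.range m, ‖δ (k + i)‖ with hD
  have hD0 : ∀ k, 0 ≤ D k := fun k => Finset.sum_nonneg fun i _ => norm_nonneg _
  set C : ℝ := (b + 1) ^ m with hC
  -- error accumulated over a block
  have hE : ∀ k, ∀ j ≤ m, ‖ε (k + j) - prodMat M k j *ᵥ ε k‖ ≤ C * D k := by
    intro k j hj
    have main : ∀ j, j ≤ m → ‖ε (k + j) - prodMat M k j *ᵥ ε k‖ ≤ (b+1) ^ j * D k := by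
      intro j
      induction j with
      | zero => intro _; simpa [prodMat, Matrix.one_mulVec] using hD0 k
      | succ j ih =>
          intro hj1
          have hjm : j ≤ m := by omega
          have ihj := ih hjm
          have hone : (1:ℝ) ≤ (b+1) ^ j := one_le_pow₀ (by linarith)
          have hrec : ε (k + (j+1)) - prodMat M k (j+1) *ᵥ ε k
              = M (k + j) *ᵥ (ε (k + j) - prodMat M k j *ᵥ ε k) + δ (k + j) := by
            have h1 : ε (k + (j + 1)) = ε ((k + j) + 1) := rfl
            rw [h1, hε (k + j), Matrix.mulVec_sub, Matrix.mulVec_mulVec]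
            have h2 : prodMat M k (j+1) = M (k + j) * prodMat M k j := rfl
            rw [h2]
            abel
          have hδle : ‖δ (k + j)‖ ≤ D k :=
            Finset.single_le_sum (f := fun i => ‖δ (k + i)‖)
              (fun i _ => norm_nonneg _) (Finset.mem_range.mpr (by omega))
          have hstep : ‖M (k + j) *ᵥ (ε (k + j) - prodMat M k j *ᵥ ε k)‖
              ≤ b * ((b+1) ^ j * D k) :=
            le_trans (Matrix.linfty_opNorm_mulVec _ _)
              (mul_le_mul (hbk _) ihj (norm_nonneg _) hb0)
          calc ‖ε (k + (j+1)) - prodMat M k (j+1) *ᵥ ε k‖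
              = ‖M (k + j) *ᵥ (ε (k + j) - prodMat M k j *ᵥ ε k) + δ (k + j)‖ := by rw [hrec]
            _ ≤ ‖M (k + j) *ᵥ (ε (k + j) - prodMat M k j *ᵥ ε k)‖ + ‖δ (k + j)‖ :=
                norm_add_le _ _
            _ ≤ b * ((b+1) ^ j * D k) + D k := add_le_add hstep hδle
            _ ≤ (b+1) ^ (j+1) * D k := by
                rw [pow_succ]
                nlinarith [le_mul_of_one_le_left (hD0 k) hone]
    refine le_trans (main j hj) ?_
    rw [hC]
    exact mul_le_mul_of_nonneg_right (pow_le_pow_right₀ (by linarith) hj) (hD0 k)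
  -- D → 0
  have hDto : Tendsto D atTop (nhds 0) := by
    have hterm : ∀ i : ℕ, Tendsto (fun k => ‖δ (k + i)‖) atTop (nhds 0) := by
      intro i
      have := hδ.comp (tendsto_add_atTop_nat i)
      exact tendsto_zero_iff_norm_tendsto_zero.mp this
    have hsum := tendsto_finset_sum (Finset.range m) (fun i _ => hterm i)
    simpa using hsum
  set a : ℕ → ℝ := fun k => ‖ε k‖ with ha
  have hblock : ∀ k, K ≤ k → a (k + m) ≤ r * a k + C * D k := by
    intro k hk
    have h3 : prodMat M k m *ᵥ ε k + (ε (k + m) - prodMat M k m *ᵥ ε k) = ε (k + m) := by abel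
    have h1 : a (k + m) ≤ ‖prodMat M k m *ᵥ ε k‖ + ‖ε (k + m) - prodMat M k m *ᵥ ε k‖ := by
      have h2 := norm_add_le (prodMat M k m *ᵥ ε k) (ε (k + m) - prodMat M k m *ᵥ ε k)
      rw [h3] at h2
      exact h2
    refine h1.trans (add_le_add ?_ (hE k m le_rfl))
    refine (Matrix.linfty_opNorm_mulVec _ _).trans ?_
    exact mul_le_mul_of_nonneg_right (hK k hk).le (norm_nonneg _)
  have hwithin : ∀ k, ∀ j ≤ m, a (k + j) ≤ b ^ m * a k + C * D k := by
    intro k j hj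
    have h3 : prodMat M k j *ᵥ ε k + (ε (k + j) - prodMat M k j *ᵥ ε k) = ε (k + j) := by abel
    have h1 : a (k + j) ≤ ‖prodMat M k j *ᵥ ε k‖ + ‖ε (k + j) - prodMat M k j *ᵥ ε k‖ := by
      have h2 := norm_add_le (prodMat M k j *ᵥ ε k) (ε (k + j) - prodMat M k j *ᵥ ε k)
      rw [h3] at h2
      exact h2
    refine h1.trans (add_le_add ?_ (hE k j hj))
    refine (Matrix.linfty_opNorm_mulVec _ _).trans ?_
    refine mul_le_mul_of_nonneg_right ?_ (norm_nonneg _)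
    exact (hPb k j).trans (pow_le_pow_right₀ hb1 hj)
  set u : ℕ → ℝ := fun j => a (K + j * m) with hu
  set sq : ℕ → ℝ := fun j => C * D (K + j * m) with hsq
  have hurec : ∀ j, u (j + 1) ≤ r * u j + sq j := by
    intro j
    have hb' := hblock (K + j * m) (Nat.le_add_right _ _)
    have harith : K + (j + 1) * m = (K + j * m) + m := by ring
    rw [hu, hsq]
    simp only []
    rw [harith]
    exact hb'
  have hm0 : 0 < m := hm1
  have hcompmono : Tendsto (fun j : ℕ => K + j * m) atTop atTop := by
    apply tendsto_atTop_atTop.mpr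
    intro N
    refine ⟨N, fun j hj => ?_⟩
    have : j ≤ j * m := Nat.le_mul_of_pos_right j hm0
    omega
  have hsqto : Tendsto sq atTop (nhds 0) := by
    have hcomp := hDto.comp hcompmono
    have := hcomp.const_mul C
    simpa [hsq] using this
  have huto : Tendsto u atTop (nhds 0) :=
    scalar_decay u sq r hr0 hrlt1 (fun j => norm_nonneg _) hurec hsqto
  rw [tendsto_zero_iff_norm_tendsto_zero]
  have hq : Tendsto (fun k : ℕ => (k - K) / m) atTop atTop := by
    apply tendsto_atTop_atTop.mpr
    intro N
    refine ⟨K + N * m, fun k hk => ?_⟩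
    rw [Nat.le_div_iff_mul_le hm0]
    omega
  have hg : Tendsto (fun k : ℕ => b ^ m * u ((k - K) / m) + sq ((k - K) / m))
      atTop (nhds 0) := by
    have h1 := (huto.comp hq).const_mul (b ^ m)
    have h2 := hsqto.comp hq
    have := h1.add h2
    simpa using this
  refine squeeze_zero' (Eventually.of_forall fun k => norm_nonneg _) ?_ hg
  filter_upwards [eventually_ge_atTop K] with k hk
  have hdm := Nat.div_add_mod (k - K) m
  have hrrm : (k - K) % m ≤ m := le_of_lt (Nat.mod_lt _ hm0)
  have hkeq : (K + ((k - K) / m) * m) + (k - K) % m = k := by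
    calc (K + ((k - K) / m) * m) + (k - K) % m
        = K + (m * ((k - K) / m) + (k - K) % m) := by ring
      _ = K + (k - K) := by rw [hdm]
      _ = k := Nat.add_sub_cancel' hk
  have hw := hwithin (K + ((k - K) / m) * m) ((k - K) % m) hrrm
  rw [hkeq] at hw
  exact hw
end

section
/- Let A be an n×n real matrix all of whose complex eigenvalues have modulus strictly less than 1, let 0 < γ < 1, and let Q be a symmetric n×n real matrix. Then the series Σ_{k=0}^{∞} γᵏ (Aᵀ)ᵏ Q Aᵏ converges (the family k ↦ γᵏ (Aᵀ)ᵏ Q Aᵏ is summable in the space of n×n matrices), and its sum P is symmetric and satisfies the discounted Lyapunov equation P = Q + γ Aᵀ P A. -/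
open Matrix

section aux

open Polynomial Filter Topology

attribute [local instance] Matrix.linftyOpSemiNormedRing Matrix.linftyOpNormedRing
  Matrix.linftyOpNormedAlgebra

lemma my_entry_le_norm {m : ℕ} (M : Matrix (Fin m) (Fin m) ℂ) (i j : Fin m) :
    ‖M i j‖ ≤ ‖M‖ := by
  have h₁ : ‖M i j‖₊ ≤ ∑ j' : Fin m, ‖M i j'‖₊ :=
    Finset.single_le_sum (f := fun j' => ‖M i j'‖₊) (fun _ _ => zero_le) (Finset.mem_univ j)
  have h₂ : (∑ j' : Fin m, ‖M i j'‖₊) ≤ Finset.univ.sup fun i => ∑ j', ‖M i j'‖₊ :=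
    Finset.le_sup (f := fun i => ∑ j' : Fin m, ‖M i j'‖₊) (Finset.mem_univ i)
  have := h₁.trans h₂
  rw [← Matrix.linfty_opNNNorm_def] at this
  exact this

lemma my_charpoly_eval {m : ℕ} (B : Matrix (Fin m) (Fin m) ℂ) (z : ℂ) :
    B.charpoly.eval z = (Matrix.scalar (Fin m) z - B).det := by
  rw [Matrix.charpoly, eval_det, matPolyEquiv_charmatrix, eval_sub, eval_X, eval_C]

lemma my_mem_spectrum_iff {m : ℕ} (B : Matrix (Fin m) (Fin m) ℂ) (z : ℂ) :
    z ∈ spectrum ℂ B ↔ B.charpoly.IsRoot z := by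
  rw [spectrum.mem_iff, Matrix.isUnit_iff_isUnit_det, isUnit_iff_ne_zero, not_not,
    Polynomial.IsRoot, my_charpoly_eval]
  have : (algebraMap ℂ (Matrix (Fin m) (Fin m) ℂ)) z = Matrix.scalar (Fin m) z := rfl
  rw [this]

lemma my_pow_entry_bound (n : ℕ) (A : Matrix (Fin n) (Fin n) ℝ)
    (hA : ∀ z : ℂ, (A.map Complex.ofReal).charpoly.IsRoot z → ‖z‖ < 1) :
    ∃ C : ℝ, ∀ (k : ℕ) (i j : Fin n), |(A ^ k) i j| ≤ C := by
  rcases Nat.eq_zero_or_pos n with h0 | hpos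
  · subst h0; exact ⟨0, fun k i j => i.elim0⟩
  haveI : Nonempty (Fin n) := ⟨⟨0, hpos⟩⟩
  set B : Matrix (Fin n) (Fin n) ℂ := A.map Complex.ofReal with hB
  have hBpow : ∀ k : ℕ, B ^ k = (A ^ k).map Complex.ofReal := by
    intro k
    have : B = Complex.ofRealHom.mapMatrix A := rfl
    rw [this, ← map_pow]
    rfl
  have hspec : ∀ z ∈ spectrum ℂ B, ‖z‖₊ < 1 := by
    intro z hz
    have := hA z ((my_mem_spectrum_iff B z).mp hz)
    rw [← NNReal.coe_lt_coe]
    simpa using this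
  have hrad : spectralRadius ℂ B < 1 := by
    have := spectrum.spectralRadius_lt_of_forall_lt B hspec
    simpa using this
  have hG := spectrum.pow_nnnorm_pow_one_div_tendsto_nhds_spectralRadius B
  have hlt : ∀ᶠ k : ℕ in atTop, (‖B ^ k‖₊ : ENNReal) ^ (1 / (k : ℝ)) < 1 := by
    have h1 : spectralRadius ℂ B < (1 : ENNReal) := by simpa using hrad
    exact hG.eventually_lt_const h1
  have hb : ∀ᶠ k : ℕ in atTop, ‖B ^ k‖ ≤ 1 := by
    filter_upwards [hlt, eventually_ge_atTop 1] with k hk hk1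
    have hk0 : (k : ℝ) ≠ 0 := by positivity
    have : (‖B ^ k‖₊ : ENNReal) < 1 := by
      calc (‖B ^ k‖₊ : ENNReal) = ((‖B ^ k‖₊ : ENNReal) ^ (1 / (k : ℝ))) ^ (k : ℝ) := by
            rw [← ENNReal.rpow_mul, one_div, inv_mul_cancel₀ hk0, ENNReal.rpow_one]
        _ < 1 := ENNReal.rpow_lt_one hk (by positivity)
    have h' : ‖B ^ k‖₊ < 1 := by exact_mod_cast this
    exact le_of_lt h'
  obtain ⟨N, hN⟩ := eventually_atTop.mp hb
  refine ⟨(∑ k ∈ Finset.range N, ‖B ^ k‖) + 1, fun k i j => ?_⟩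
  have hentry : |(A ^ k) i j| = ‖(B ^ k) i j‖ := by
    rw [hBpow k]
    simp [Matrix.map_apply, Complex.norm_real]
  rw [hentry]
  have hnonneg : (0 : ℝ) ≤ ∑ k ∈ Finset.range N, ‖B ^ k‖ :=
    Finset.sum_nonneg fun _ _ => norm_nonneg _
  rcases le_or_gt N k with h | h
  · calc ‖(B ^ k) i j‖ ≤ ‖B ^ k‖ := my_entry_le_norm _ i j
      _ ≤ 1 := hN k h
      _ ≤ _ := le_add_of_nonneg_left hnonneg
  · calc ‖(B ^ k) i j‖ ≤ ‖B ^ k‖ := my_entry_le_norm _ i j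
      _ ≤ ∑ k ∈ Finset.range N, ‖B ^ k‖ :=
          Finset.single_le_sum (fun _ _ => norm_nonneg _) (Finset.mem_range.mpr h)
      _ ≤ _ := le_add_of_nonneg_right zero_le_one

end aux

/-- For a stable matrix `A`, `0 < γ < 1` and symmetric `Q`, the series
`Σ γᵏ (Aᵀ)ᵏ Q Aᵏ` is summable, its sum is symmetric and solves the discounted
Lyapunov equation `P = Q + γ Aᵀ P A`. -/
theorem stmt8 (n : ℕ) (A : Matrix (Fin n) (Fin n) ℝ)
    (hA : ∀ z : ℂ, (A.map Complex.ofReal).charpoly.IsRoot z → ‖z‖ < 1)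
    (γ : ℝ) (hγ0 : 0 < γ) (hγ1 : γ < 1)
    (Q : Matrix (Fin n) (Fin n) ℝ) (hQ : Q.IsSymm) :
    Summable (fun k : ℕ => γ ^ k • (Aᵀ ^ k * Q * A ^ k)) ∧
      (∑' k : ℕ, γ ^ k • (Aᵀ ^ k * Q * A ^ k)).IsSymm ∧
      (∑' k : ℕ, γ ^ k • (Aᵀ ^ k * Q * A ^ k)) =
        Q + γ • (Aᵀ * (∑' k : ℕ, γ ^ k • (Aᵀ ^ k * Q * A ^ k)) * A) := by
  obtain ⟨C₀, hC₀⟩ := my_pow_entry_bound n A hA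
  set C : ℝ := max C₀ 0 with hCdef
  have hC0 : (0 : ℝ) ≤ C := le_max_right _ _
  have hAk : ∀ (k : ℕ) (i j : Fin n), |(A ^ k) i j| ≤ C :=
    fun k i j => (hC₀ k i j).trans (le_max_left _ _)
  set f : ℕ → Matrix (Fin n) (Fin n) ℝ := fun k => γ ^ k • (Aᵀ ^ k * Q * A ^ k) with hf
  set D : ℝ := ∑ a : Fin n, ∑ b : Fin n, |Q a b| with hD
  have hD0 : 0 ≤ D := Finset.sum_nonneg fun _ _ => Finset.sum_nonneg fun _ _ => abs_nonneg _
  have hbound : ∀ (k : ℕ) (i j : Fin n), |f k i j| ≤ γ ^ k * (C * C * D) := by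
    intro k i j
    have h1 : f k i j = γ ^ k * ((Aᵀ ^ k * Q * A ^ k) i j) := rfl
    rw [h1, abs_mul, abs_pow, abs_of_pos hγ0]
    refine mul_le_mul_of_nonneg_left ?_ (by positivity)
    have hexp : (Aᵀ ^ k * Q * A ^ k) i j
        = ∑ b : Fin n, (∑ a : Fin n, (A ^ k) a i * Q a b) * (A ^ k) b j := by
      simp [Matrix.mul_apply, ← Matrix.transpose_pow, Matrix.transpose_apply]
    rw [hexp]
    calc |∑ b : Fin n, (∑ a : Fin n, (A ^ k) a i * Q a b) * (A ^ k) b j|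
        ≤ ∑ b : Fin n, ∑ a : Fin n, |(A ^ k) a i * Q a b * (A ^ k) b j| := by
          refine (Finset.abs_sum_le_sum_abs _ _).trans (Finset.sum_le_sum fun b _ => ?_)
          calc |(∑ a : Fin n, (A ^ k) a i * Q a b) * (A ^ k) b j|
              = |∑ a : Fin n, (A ^ k) a i * Q a b| * |(A ^ k) b j| := abs_mul _ _
            _ ≤ (∑ a : Fin n, |(A ^ k) a i * Q a b|) * |(A ^ k) b j| :=
                mul_le_mul_of_nonneg_right (Finset.abs_sum_le_sum_abs _ _) (abs_nonneg _)
            _ = ∑ a : Fin n, |(A ^ k) a i * Q a b| * |(A ^ k) b j| := Finset.sum_mul _ _ _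
            _ = ∑ a : Fin n, |(A ^ k) a i * Q a b * (A ^ k) b j| := by
                simp [abs_mul]
      _ ≤ ∑ b : Fin n, ∑ a : Fin n, C * |Q a b| * C := by
          refine Finset.sum_le_sum fun b _ => Finset.sum_le_sum fun a _ => ?_
          rw [abs_mul, abs_mul]
          refine mul_le_mul ?_ (hAk k b j) (abs_nonneg _) (by positivity)
          exact mul_le_mul (hAk k a i) le_rfl (abs_nonneg _) hC0
      _ = C * C * D := by
          rw [Finset.sum_comm, hD, Finset.mul_sum]
          refine Finset.sum_congr rfl fun a _ => ?_
          rw [Finset.mul_sum]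
          refine Finset.sum_congr rfl fun b _ => ?_
          ring
  have hgeo : Summable fun k : ℕ => γ ^ k * (C * C * D) :=
    (summable_geometric_of_lt_one hγ0.le hγ1).mul_right _
  have hs_entry : ∀ (i j : Fin n), Summable fun k => f k i j := by
    intro i j
    refine Summable.of_abs ?_
    exact hgeo.of_nonneg_of_le (fun k => abs_nonneg _) (fun k => hbound k i j)
  have hsum : Summable f := by
    refine Pi.summable.mpr fun i => Pi.summable.mpr fun j => hs_entry i j
  have hterm_symm : ∀ k, (f k)ᵀ = f k := by
    intro k
    simp only [hf, Matrix.transpose_smul, Matrix.transpose_mul, Matrix.transpose_pow,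
      Matrix.transpose_transpose, hQ.eq, Matrix.mul_assoc]
  have hsymm : (∑' k : ℕ, f k).IsSymm := by
    have : (∑' k : ℕ, f k)ᵀ = ∑' k : ℕ, f k := by
      rw [Matrix.transpose_tsum]
      exact tsum_congr hterm_symm
    exact this
  have h0 : f 0 = Q := by simp [hf]
  have hrec : ∀ k, f (k + 1) = γ • (Aᵀ * f k * A) := by
    intro k
    simp only [hf]
    rw [pow_succ γ k, mul_comm (γ ^ k) γ, mul_smul, pow_succ A k, pow_succ' Aᵀ k,
      Matrix.mul_smul, Matrix.smul_mul]
    congr 1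
    simp only [Matrix.mul_assoc]
  have hg : Continuous fun X : Matrix (Fin n) (Fin n) ℝ => γ • (Aᵀ * X * A) :=
    ((continuous_const.matrix_mul continuous_id).matrix_mul continuous_const).const_smul γ
  let g : Matrix (Fin n) (Fin n) ℝ →+ Matrix (Fin n) (Fin n) ℝ :=
    AddMonoidHom.mk' (fun X => γ • (Aᵀ * X * A)) (fun X Y => by
      simp [Matrix.mul_add, Matrix.add_mul, smul_add])
  have h2 : HasSum (fun k => f (k + 1)) (γ • (Aᵀ * (∑' k : ℕ, f k) * A)) := by
    have hm := hsum.hasSum.map g hg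
    have he : ⇑g ∘ f = fun k => f (k + 1) := by
      funext k
      rw [Function.comp_apply, hrec k]
      rfl
    rw [he] at hm
    exact hm
  have hP : (∑' k : ℕ, f k) = Q + γ • (Aᵀ * (∑' k : ℕ, f k) * A) := by
    refine (Summable.tsum_eq_zero_add hsum).trans ?_
    rw [h0, h2.tsum_eq]
  exact ⟨hsum, hsymm, hP⟩
end

section
/- Let A be an n×n real matrix all of whose complex eigenvalues have modulus strictly less than 1, let 0 < γ < 1, let Q be a symmetric positive semidefinite n×n real matrix, and let P := Σ_{k=0}^{∞} γᵏ (Aᵀ)ᵏ Q Aᵏ. Then for every x₀ ∈ ℝⁿ, the sequence x_t := Aᵗ x₀ satisfies that t ↦ γᵗ x_tᵀ Q x_t is summable and Σ_{t=0}^{∞} γᵗ x_tᵀ Q x_t = x₀ᵀ P x₀. -/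
open Matrix Polynomial Filter
open scoped NNReal ENNReal

lemma specroot (n : ℕ) (B : Matrix (Fin n) (Fin n) ℂ) (z : ℂ) (hz : z ∈ spectrum ℂ B) :
    B.charpoly.IsRoot z := by
  have heval : B.charpoly.eval z = (Matrix.scalar (Fin n) z - B).det := by
    rw [Matrix.charpoly, _root_.eval_det, matPolyEquiv_charmatrix]
    simp
  rw [spectrum.mem_iff] at hz
  have halg : algebraMap ℂ (Matrix (Fin n) (Fin n) ℂ) z = Matrix.scalar (Fin n) z := rfl
  rw [Polynomial.IsRoot, heval]
  by_contra hdet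
  exact hz (by rw [halg] at *; exact (Matrix.isUnit_iff_isUnit_det _).mpr (isUnit_iff_ne_zero.mpr hdet))

section normed
attribute [local instance] Matrix.linftyOpNormedAddCommGroup Matrix.linftyOpNormedRing
  Matrix.linftyOpNormedAlgebra

lemma geom_bound (n : ℕ) (A : Matrix (Fin n) (Fin n) ℝ)
    (hA : ∀ z : ℂ, (A.map Complex.ofReal).charpoly.IsRoot z → ‖z‖ < 1) :
    ∃ C r : ℝ, 0 ≤ C ∧ 0 < r ∧ r < 1 ∧ ∀ k, ∀ i j : Fin n, |(A ^ k) i j| ≤ C * r ^ k := by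
  rcases Nat.eq_zero_or_pos n with hn | hn
  · exact ⟨1, 1/2, by norm_num, by norm_num, by norm_num,
      fun k i j => by subst hn; exact absurd i.2 (by omega)⟩
  haveI : NeZero n := ⟨hn.ne'⟩
  haveI : Nontrivial (Matrix (Fin n) (Fin n) ℂ) :=
    inferInstanceAs (Nontrivial (Fin n → Fin n → ℂ))
  haveI : CompleteSpace (Matrix (Fin n) (Fin n) ℂ) :=
    inferInstanceAs (CompleteSpace (Fin n → Fin n → ℂ))
  set B : Matrix (Fin n) (Fin n) ℂ := A.map Complex.ofReal with hB
  have hspec : spectralRadius ℂ B < 1 := by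
    have := spectrum.spectralRadius_lt_of_forall_lt B
      (r := 1) (fun z hz => by
        have := hA z (specroot n B z hz)
        rwa [← coe_nnnorm, NNReal.coe_lt_one] at this)
    simpa using this
  -- pick r with spectralRadius < r < 1 and r > 0
  obtain ⟨r, hsr, hr1⟩ := ENNReal.lt_iff_exists_nnreal_btwn.mp
    (show max (spectralRadius ℂ B) (1/2) < 1 from
      max_lt hspec (by norm_num))
  have h2 : ((1/2 : ℝ≥0) : ℝ≥0∞) < r := by
    refine lt_of_le_of_lt ?_ hsr
    refine le_trans ?_ (le_max_right _ _)
    norm_num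
  have hr0 : (0:ℝ≥0) < r := lt_of_le_of_lt (by norm_num) (ENNReal.coe_lt_coe.mp h2)
  have hr1' : (r:ℝ) < 1 := by exact_mod_cast hr1
  -- Gelfand: eventually ‖B^k‖₊ ≤ r^k
  have hgel := spectrum.pow_nnnorm_pow_one_div_tendsto_nhds_spectralRadius B
  have hev : ∀ᶠ k : ℕ in atTop, (‖B ^ k‖₊ : ℝ≥0∞) ^ (1/(k:ℝ)) < r :=
    hgel.eventually_lt_const (lt_of_le_of_lt (le_max_left _ _) hsr)
  have hev2 : ∀ᶠ k : ℕ in atTop, ‖B ^ k‖₊ ≤ r ^ k := by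
    filter_upwards [hev, Filter.eventually_ge_atTop 1] with k hk hk1
    have hkne : (k:ℝ) ≠ 0 := Nat.cast_ne_zero.mpr (by omega)
    have := ENNReal.rpow_lt_rpow hk (by positivity : (0:ℝ) < (k:ℝ))
    rw [← ENNReal.rpow_mul, one_div, inv_mul_cancel₀ hkne, ENNReal.rpow_one,
      ENNReal.rpow_natCast] at this
    rw [show ((r:ℝ≥0∞))^k = ((r^k : ℝ≥0) : ℝ≥0∞) by push_cast; ring] at this
    exact_mod_cast this.le
  obtain ⟨N, hN⟩ := hev2.exists_forall_of_atTop
  set C : ℝ := (∑ k ∈ Finset.range N, ‖B ^ k‖ / (r:ℝ)^k) + 1 with hC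
  have hrpos : ∀ k : ℕ, (0:ℝ) < (r:ℝ)^k := fun k => by positivity
  have hC1 : (1:ℝ) ≤ C := by
    rw [hC]
    have : (0:ℝ) ≤ ∑ k ∈ Finset.range N, ‖B ^ k‖ / (r:ℝ)^k :=
      Finset.sum_nonneg fun k _ => by positivity
    linarith
  have hnorm : ∀ k, ‖B ^ k‖ ≤ C * (r:ℝ)^k := by
    intro k
    rcases lt_or_ge k N with hkN | hkN
    · have hmem : ‖B ^ k‖ / (r:ℝ)^k ≤ ∑ j ∈ Finset.range N, ‖B ^ j‖ / (r:ℝ)^j :=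
        Finset.single_le_sum (f := fun j => ‖B ^ j‖ / (r:ℝ)^j)
          (fun j _ => by positivity) (Finset.mem_range.mpr hkN)
      rw [div_le_iff₀ (hrpos k)] at hmem
      calc ‖B ^ k‖ ≤ (∑ j ∈ Finset.range N, ‖B ^ j‖ / (r:ℝ)^j) * (r:ℝ)^k := hmem
        _ ≤ C * (r:ℝ)^k := by
            apply mul_le_mul_of_nonneg_right _ (hrpos k).le
            rw [hC]; linarith
    · have : ‖B ^ k‖ ≤ (r:ℝ)^k := by
        have := hN k hkN
        have : ‖B ^ k‖₊ ≤ r ^ k := this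
        exact_mod_cast this
      calc ‖B ^ k‖ ≤ (r:ℝ)^k := this
        _ ≤ C * (r:ℝ)^k := le_mul_of_one_le_left (hrpos k).le hC1
  refine ⟨C, r, by linarith, by exact_mod_cast hr0, hr1', fun k i j => ?_⟩
  have hmap : B ^ k = (A ^ k).map Complex.ofReal := by
    have := map_pow (Complex.ofRealHom.mapMatrix) A k
    exact this.symm
  have habs : |(A ^ k) i j| = ‖(B ^ k) i j‖ := by
    rw [hmap]
    simp [Matrix.map_apply, Complex.norm_real]
  rw [habs]
  calc ‖(B ^ k) i j‖ ≤ ‖B ^ k‖ := by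
        have h1 : ‖(B ^ k) i j‖₊ ≤ ∑ j', ‖(B ^ k) i j'‖₊ :=
          Finset.single_le_sum (f := fun j' => ‖(B ^ k) i j'‖₊)
            (fun _ _ => zero_le') (Finset.mem_univ j)
        have h2 : (∑ j', ‖(B ^ k) i j'‖₊) ≤ ‖B ^ k‖₊ := by
          rw [Matrix.linfty_opNNNorm_def]
          exact Finset.le_sup (f := fun i => ∑ j' : Fin n, ‖(B ^ k) i j'‖₊) (Finset.mem_univ i)
        exact_mod_cast h1.trans h2
    _ ≤ C * (r:ℝ)^k := hnorm k
end normed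


open Matrix

/-- Noiseless discounted LQ value: along `x_t = Aᵗ x₀`, the discounted quadratic cost is
summable with sum `x₀ᵀ P x₀`, where `P = Σ γᵏ (Aᵀ)ᵏ Q Aᵏ`. -/
theorem stmt9 (n : ℕ) (A : Matrix (Fin n) (Fin n) ℝ)
    (hA : ∀ z : ℂ, (A.map Complex.ofReal).charpoly.IsRoot z → ‖z‖ < 1)
    (γ : ℝ) (hγ0 : 0 < γ) (hγ1 : γ < 1)
    (Q : Matrix (Fin n) (Fin n) ℝ) (hQ : Q.PosSemidef)
    (P : Matrix (Fin n) (Fin n) ℝ) (hP : P = ∑' k : ℕ, γ ^ k • (Aᵀ ^ k * Q * A ^ k))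
    (x₀ : Fin n → ℝ) (x : ℕ → Fin n → ℝ) (hx : ∀ t, x t = (A ^ t).mulVec x₀) :
    Summable (fun t : ℕ => γ ^ t * (x t ⬝ᵥ Q.mulVec (x t))) ∧
      (∑' t : ℕ, γ ^ t * (x t ⬝ᵥ Q.mulVec (x t))) = x₀ ⬝ᵥ P.mulVec x₀ := by
  have hA' := geom_bound n A hA
  obtain ⟨C, r, hC, hr0, hr1, hbound⟩ := hA'
  set f : ℕ → Matrix (Fin n) (Fin n) ℝ := fun k => γ ^ k • (Aᵀ ^ k * Q * A ^ k) with hf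
  -- entrywise bound
  set K : ℝ := C^2 * ∑ a : Fin n, ∑ b : Fin n, |Q a b| with hK
  have hKnn : 0 ≤ K := by
    apply mul_nonneg (by positivity)
    exact Finset.sum_nonneg fun a _ => Finset.sum_nonneg fun b _ => abs_nonneg _
  have hentry : ∀ k, ∀ i j : Fin n, |f k i j| ≤ K * γ ^ k := by
    intro k i j
    have hfk : f k i j = γ ^ k * ∑ a : Fin n, ∑ b : Fin n,
        (Aᵀ ^ k) i a * Q a b * (A ^ k) b j := by
      rw [hf]
      simp only [Matrix.smul_apply, smul_eq_mul]
      congr 1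
      rw [Finset.sum_comm]
      simp [Matrix.mul_apply, Finset.sum_mul]
    rw [hfk, abs_mul, abs_pow, abs_of_pos hγ0, mul_comm]
    apply mul_le_mul_of_nonneg_right _ (by positivity)
    calc |∑ a : Fin n, ∑ b : Fin n, (Aᵀ ^ k) i a * Q a b * (A ^ k) b j|
        ≤ ∑ a : Fin n, ∑ b : Fin n, |(Aᵀ ^ k) i a * Q a b * (A ^ k) b j| := by
          apply (Finset.abs_sum_le_sum_abs _ _).trans
          apply Finset.sum_le_sum
          intro a _
          exact Finset.abs_sum_le_sum_abs _ _
      _ ≤ ∑ a : Fin n, ∑ b : Fin n, (C * r ^ k) * |Q a b| * (C * r ^ k) := by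
          apply Finset.sum_le_sum; intro a _
          apply Finset.sum_le_sum; intro b _
          rw [abs_mul, abs_mul]
          have h1 : |(Aᵀ ^ k) i a| ≤ C * r ^ k := by
            rw [← Matrix.transpose_pow, Matrix.transpose_apply]
            exact hbound k a i
          have h2 : |(A ^ k) b j| ≤ C * r ^ k := hbound k b j
          have hq : (0:ℝ) ≤ |Q a b| := abs_nonneg _
          exact mul_le_mul (mul_le_mul_of_nonneg_right h1 hq) h2 (abs_nonneg _) (by positivity)
      _ ≤ K := by
          have hrk : r ^ k ≤ 1 := pow_le_one₀ hr0.le hr1.le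
          have : ∀ a b : Fin n, (C * r ^ k) * |Q a b| * (C * r ^ k) ≤ C^2 * |Q a b| := by
            intro a b
            have hcr : C * r ^ k ≤ C := by
              calc C * r ^ k ≤ C * 1 := mul_le_mul_of_nonneg_left hrk hC
                _ = C := mul_one C
            have h0 : 0 ≤ C * r ^ k := by positivity
            have hq : (0:ℝ) ≤ |Q a b| := abs_nonneg _
            have h1 : (C * r ^ k) * |Q a b| ≤ C * |Q a b| := mul_le_mul_of_nonneg_right hcr hq
            have h2 : (C * r ^ k) * |Q a b| * (C * r ^ k) ≤ (C * |Q a b|) * C :=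
              mul_le_mul h1 hcr h0 (by positivity)
            calc (C * r ^ k) * |Q a b| * (C * r ^ k) ≤ (C * |Q a b|) * C := h2
              _ = C ^ 2 * |Q a b| := by ring
          calc ∑ a : Fin n, ∑ b : Fin n, (C * r ^ k) * |Q a b| * (C * r ^ k)
              ≤ ∑ a : Fin n, ∑ b : Fin n, C^2 * |Q a b| :=
                Finset.sum_le_sum fun a _ => Finset.sum_le_sum fun b _ => this a b
            _ = K := by rw [hK, Finset.mul_sum]; congr 1; ext a; rw [Finset.mul_sum]
  have hgeo : Summable (fun k : ℕ => K * γ ^ k) :=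
    (summable_geometric_of_lt_one hγ0.le hγ1).mul_left K
  have hsum_entry : ∀ i j : Fin n, Summable (fun k => f k i j) := fun i j =>
    Summable.of_norm_bounded hgeo (fun k => by
      simpa [Real.norm_eq_abs] using hentry k i j)
  have hsumf : Summable f :=
    Pi.summable.mpr fun i => Pi.summable.mpr fun j => hsum_entry i j
  have hPentry : ∀ i j : Fin n, P i j = ∑' k, f k i j := by
    intro i j
    rw [hP]
    rw [show (∑' k, f k) i j = ((∑' k, f k : Fin n → Fin n → ℝ) i) j from rfl]
    rw [tsum_apply hsumf, tsum_apply (Pi.summable.mpr fun j' => hsum_entry i j')]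
  -- scalar form
  have hFk : ∀ k, γ ^ k * (x k ⬝ᵥ Q.mulVec (x k)) =
      ∑ i : Fin n, ∑ j : Fin n, x₀ i * f k i j * x₀ j := by
    intro k
    have key : x k ⬝ᵥ Q.mulVec (x k) = x₀ ⬝ᵥ (Aᵀ ^ k * Q * A ^ k).mulVec x₀ := by
      rw [hx, ← Matrix.transpose_pow, mul_assoc, ← Matrix.mulVec_mulVec, ← Matrix.mulVec_mulVec,
        Matrix.dotProduct_mulVec x₀, Matrix.vecMul_transpose]
    rw [key]
    simp only [dotProduct, Matrix.mulVec, hf, Matrix.smul_apply, smul_eq_mul,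
      Finset.mul_sum, Finset.sum_mul]
    refine Finset.sum_congr rfl fun i _ => Finset.sum_congr rfl fun j _ => by ring
  have hsumF : ∀ i j : Fin n, Summable (fun k => x₀ i * f k i j * x₀ j) := by
    intro i j
    simpa [mul_assoc, mul_comm, mul_left_comm] using ((hsum_entry i j).mul_left (x₀ i)).mul_right (x₀ j)
  have hsummain : Summable (fun t : ℕ => γ ^ t * (x t ⬝ᵥ Q.mulVec (x t))) := by
    have h : Summable (fun k => ∑ i : Fin n, ∑ j : Fin n, x₀ i * f k i j * x₀ j) :=
      summable_sum fun i _ => summable_sum fun j _ => hsumF i j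
    exact h.congr fun k => (hFk k).symm
  refine ⟨hsummain, ?_⟩
  have hts : (∑' t : ℕ, γ ^ t * (x t ⬝ᵥ Q.mulVec (x t))) =
      ∑' k, ∑ i : Fin n, ∑ j : Fin n, x₀ i * f k i j * x₀ j :=
    tsum_congr fun k => hFk k
  rw [hts, Summable.tsum_finsetSum (fun i _ => summable_sum fun j _ => hsumF i j)]
  have : ∀ i : Fin n, (∑' k, ∑ j : Fin n, x₀ i * f k i j * x₀ j)
      = ∑ j : Fin n, x₀ i * P i j * x₀ j := by
    intro i
    rw [Summable.tsum_finsetSum (fun j _ => hsumF i j)]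
    refine Finset.sum_congr rfl fun j _ => ?_
    rw [hPentry i j]
    rw [tsum_mul_right, tsum_mul_left]
  rw [Finset.sum_congr rfl fun i _ => this i]
  simp only [dotProduct, Matrix.mulVec, Finset.mul_sum]
  exact Finset.sum_congr rfl fun i _ => Finset.sum_congr rfl fun j _ => by ring
end

section
/- Let H be a real inner product space, p ≥ 1, and let w : ℕ → H be pairwise orthogonal (⟨w_i, w_j⟩ = 0 for i ≠ j). Let c_1, …, c_p be reals and define y_k = w_k + Σ_{j=1}^{p} c_j w_{k−j} for k ∈ ℕ, where terms with negative index are taken to be 0. Let e : ℕ → H and real coefficients γ_{k,i} (k ∈ ℕ, 1 ≤ i ≤ p) satisfy, for every k: e_k = y_k − Σ_{i=1}^{p} γ_{k,i} e_{k−i} (terms with negative index taken to be 0) and ⟨e_k, e_{k−i}⟩ = 0 for each i = 1, …, p with k − i ≥ 0. Then ⟨e_k, e_j⟩ = 0 for all j < k. -/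
open scoped RealInnerProductSpace

/-!
By strong induction each `e_j` lies in the span of `w_0, …, w_j`, so `w_m ⟂ e_j` for `j < m`.
For `j < k` with `k ≤ j + p` the claim is a hypothesis. Otherwise expand
`e_k = w_k + ∑ c_i w_{k-i-1} - ∑ γ_{k,i} e_{k-i-1}`: every lag satisfies `j < k - i - 1`, so the
noise terms are orthogonal to `e_j` by the first step and the error terms by induction on `k`.
-/

theorem Submodule.sum_lag_mem {R M : Type*} [Semiring R] [AddCommMonoid M] [Module R M]
    (K : Submodule R M) {p k : ℕ} (a : Fin p → R) (f : ℕ → M)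
    (hf : ∀ i : Fin p, (i : ℕ) + 1 ≤ k → f (k - ((i : ℕ) + 1)) ∈ K) :
    (∑ i : Fin p, if (i : ℕ) + 1 ≤ k then a i • f (k - ((i : ℕ) + 1)) else 0) ∈ K := by
  refine K.sum_mem fun i _ => ?_
  split_ifs with hi
  · exact K.smul_mem _ (hf i hi)
  · exact K.zero_mem

theorem inner_noise_predictionError_eq_zero {H : Type*} [NormedAddCommGroup H]
    [InnerProductSpace ℝ H] {p : ℕ} {w : ℕ → H} (hw : ∀ i j, i ≠ j → ⟪w i, w j⟫ = 0)
    {c : Fin p → ℝ} {y : ℕ → H}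
    (hy : ∀ k, y k = w k +
      ∑ j : Fin p, if (j : ℕ) + 1 ≤ k then c j • w (k - ((j : ℕ) + 1)) else 0)
    {e : ℕ → H} {γ : ℕ → Fin p → ℝ}
    (he : ∀ k, e k = y k -
      ∑ i : Fin p, if (i : ℕ) + 1 ≤ k then γ k i • e (k - ((i : ℕ) + 1)) else 0)
    {j m : ℕ} (hjm : j < m) : ⟪w m, e j⟫ = 0 := by
  rw [← Submodule.mem_orthogonal_singleton_iff_inner_right]
  set K := (ℝ ∙ w m)ᗮ
  have hwK : ∀ n < m, w n ∈ K := fun n hn =>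
    Submodule.mem_orthogonal_singleton_iff_inner_right.2 (hw m n (by omega))
  induction j using Nat.strong_induction_on with
  | _ j ih =>
    rw [he j, hy j]
    refine K.sub_mem (K.add_mem (hwK j hjm) ?_) ?_
    · exact K.sum_lag_mem c w fun i hi => hwK _ (by omega)
    · exact K.sum_lag_mem (γ j) e fun i hi => ih _ (by omega) (by omega)

theorem stmt11_general {H : Type*} [NormedAddCommGroup H] [InnerProductSpace ℝ H]
    (p : ℕ) (w : ℕ → H)
    (hw : ∀ i j, i ≠ j → ⟪w i, w j⟫ = 0)
    (c : Fin p → ℝ) (y : ℕ → H)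
    (hy : ∀ k, y k = w k +
      ∑ j : Fin p, if (j : ℕ) + 1 ≤ k then c j • w (k - ((j : ℕ) + 1)) else 0)
    (e : ℕ → H) (γ : ℕ → Fin p → ℝ)
    (he : ∀ k, e k = y k -
      ∑ i : Fin p, if (i : ℕ) + 1 ≤ k then γ k i • e (k - ((i : ℕ) + 1)) else 0)
    (horth : ∀ k, ∀ i : Fin p, (i : ℕ) + 1 ≤ k → ⟪e k, e (k - ((i : ℕ) + 1))⟫ = 0) :
    ∀ k j, j < k → ⟪e k, e j⟫ = 0 := by
  intro k
  induction k using Nat.strong_induction_on with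
  | _ k ih =>
    intro j hjk
    by_cases hnear : k ≤ j + p
    · have hlag : k - ((k - j - 1 : ℕ) + 1) = j := by omega
      simpa only [hlag] using horth k ⟨k - j - 1, by omega⟩ (by simp only; omega)
    · rw [← Submodule.mem_orthogonal_singleton_iff_inner_left]
      set K := (ℝ ∙ e j)ᗮ
      have hwK : ∀ n, j < n → w n ∈ K := fun n hn =>
        Submodule.mem_orthogonal_singleton_iff_inner_left.2
          (inner_noise_predictionError_eq_zero hw hy he hn)
      rw [he k, hy k]
      refine K.sub_mem (K.add_mem (hwK k hjk) ?_) ?_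
      · exact K.sum_lag_mem c w fun i hi => hwK _ (by omega)
      · exact K.sum_lag_mem (γ k) e fun i hi =>
          Submodule.mem_orthogonal_singleton_iff_inner_left.2 (ih _ (by omega) j (by omega))

/-- Orthogonality propagation for the value-iteration identification of an MA(p) model:
if each error `e_k` is orthogonal to the previous `p` errors, then all errors are
pairwise orthogonal. -/
theorem stmt11 {H : Type*} [NormedAddCommGroup H] [InnerProductSpace ℝ H]
    (p : ℕ) (hp : 1 ≤ p) (w : ℕ → H)
    (hw : ∀ i j, i ≠ j → ⟪w i, w j⟫ = 0)
    (c : Fin p → ℝ) (y : ℕ → H)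
    (hy : ∀ k, y k = w k +
      ∑ j : Fin p, if (j : ℕ) + 1 ≤ k then c j • w (k - ((j : ℕ) + 1)) else 0)
    (e : ℕ → H) (γ : ℕ → Fin p → ℝ)
    (he : ∀ k, e k = y k -
      ∑ i : Fin p, if (i : ℕ) + 1 ≤ k then γ k i • e (k - ((i : ℕ) + 1)) else 0)
    (horth : ∀ k, ∀ i : Fin p, (i : ℕ) + 1 ≤ k → ⟪e k, e (k - ((i : ℕ) + 1))⟫ = 0) :
    ∀ k j, j < k → ⟪e k, e j⟫ = 0 :=
  stmt11_general p w hw c y hy e γ he horth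
end
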